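/- For E > 0 and c ∈ ℝ, the squared L² norm of the bright-soliton profile satisfies ∫_ℝ φ_{E,c}(y)² dy = 8 arctan(√((√(c²+4E)+c)/(√(c²+4E)−c))), and in particular this quantity is at most 4π. -/

import Mathlib

/-!
With `s = √(c² + 4E)` one has `φ² = 8E / (s cosh(2√E y) - c)`, and for `|b| < a` the function
`arctan (√((a + b)/(a - b)) tanh (k y))` is an antiderivative of `k √(a² - b²) / (a cosh(2ky) - b)`
(write `cosh(2ky)` through `cosh²(ky)` and `sinh²(ky)`). As `tanh → ±1` at `±∞`, the mass is
`8 arctan √((s + c)/(s - c)) < 8 · π/2`.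
-/

open MeasureTheory Real Filter Topology Set

namespace Real

theorem hasDerivAt_tanh (x : ℝ) : HasDerivAt tanh (1 / cosh x ^ 2) x := by
  have htanh : tanh = fun x => sinh x / cosh x := funext tanh_eq_sinh_div_cosh
  rw [htanh]
  refine ((hasDerivAt_sinh x).div (hasDerivAt_cosh x) (cosh_pos x).ne').congr_deriv ?_
  rw [← sq, ← sq, cosh_sq]
  ring

theorem tanh_eq_one_sub (x : ℝ) : tanh x = 1 - 2 / (exp (2 * x) + 1) := by
  have hexp : exp (2 * x) = exp x ^ 2 := by rw [← exp_nat_mul]; norm_num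
  rw [tanh_eq, exp_neg, hexp]
  field_simp
  ring

theorem tendsto_tanh_atTop : Tendsto tanh atTop (𝓝 1) := by
  have hden : Tendsto (fun x => exp (2 * x) + 1) atTop atTop :=
    tendsto_atTop_add_const_right _ 1
      (tendsto_exp_atTop.comp (tendsto_id.const_mul_atTop two_pos))
  have h := (tendsto_const_nhds (x := (1 : ℝ))).sub
    ((tendsto_const_nhds (x := (2 : ℝ))).div_atTop hden)
  simpa only [← tanh_eq_one_sub, sub_zero] using h

theorem tendsto_tanh_atBot : Tendsto tanh atBot (𝓝 (-1)) := by
  have h := (tendsto_tanh_atTop.comp tendsto_neg_atBot_atTop).neg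
  simpa [Function.comp_def] using h

end Real

theorem hasDerivAt_arctan_mul_tanh (m k y : ℝ) :
    HasDerivAt (fun y => arctan (m * tanh (k * y)))
      (m * k / (cosh (k * y) ^ 2 + m ^ 2 * sinh (k * y) ^ 2)) y := by
  have hlin : HasDerivAt (fun y => k * y) k y := by
    simpa using (hasDerivAt_id y).const_mul k
  refine (((hasDerivAt_tanh (k * y)).comp y hlin).const_mul m).arctan.congr_deriv ?_
  have hcosh := (cosh_pos (k * y)).ne'
  rw [Function.comp_apply, tanh_eq_sinh_div_cosh]
  field_simp

theorem integral_of_hasDerivAt_of_tendsto_of_nonneg {f f' : ℝ → ℝ} {m n : ℝ}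
    (hderiv : ∀ x, HasDerivAt f (f' x) x) (hf' : ∀ x, 0 ≤ f' x)
    (hbot : Tendsto f atBot (𝓝 m)) (htop : Tendsto f atTop (𝓝 n)) :
    ∫ x, f' x = n - m := by
  have hIoi : IntegrableOn f' (Ioi 0) :=
    integrableOn_Ioi_deriv_of_nonneg' (fun x _ => hderiv x) (fun x _ => hf' x) htop
  have hIio : IntegrableOn f' (Iio 0) := by
    have hreflect : IntegrableOn (fun x => f' (-x)) (Ioi (-0)) := by
      refine integrableOn_Ioi_deriv_of_nonneg' (g := fun x => -f (-x)) (fun x _ => ?_)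
        (fun x _ => hf' _) (hbot.comp tendsto_neg_atTop_atBot).neg
      exact ((hderiv (-x)).comp x (hasDerivAt_neg x)).neg.congr_deriv (by ring)
    simpa using hreflect.comp_neg_Iio
  refine integral_of_hasDerivAt_of_tendsto hderiv ?_ hbot htop
  rw [← integrableOn_univ, ← Iio_union_Ici (a := (0 : ℝ))]
  exact hIio.union ((integrableOn_Ici_iff_integrableOn_Ioi).mpr hIoi)

theorem integral_inv_mul_cosh_sub {a b k : ℝ} (hk : 0 < k) (hba : |b| < a) :
    ∫ y, (a * cosh (2 * k * y) - b)⁻¹ =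
      2 * arctan (√((a + b) / (a - b))) / (k * √(a ^ 2 - b ^ 2)) := by
  obtain ⟨hab, hba⟩ := abs_lt.mp hba
  set m := √((a + b) / (a - b))
  have hm2 : m ^ 2 = (a + b) / (a - b) := sq_sqrt (div_pos (by linarith) (by linarith)).le
  have hm_mul : m * (a - b) = √(a ^ 2 - b ^ 2) := by
    have hsq : a ^ 2 - b ^ 2 = (m * (a - b)) ^ 2 := by
      rw [mul_pow, hm2]; field_simp; ring
    rw [hsq, sqrt_sq (mul_nonneg (sqrt_nonneg _) (by linarith))]
  have hC : 0 < k * √(a ^ 2 - b ^ 2) := mul_pos hk (sqrt_pos.mpr (by nlinarith))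
  have hden : ∀ y, 0 < a * cosh (2 * k * y) - b := fun y => by
    nlinarith [one_le_cosh (2 * k * y)]
  have hquad : ∀ y, cosh (k * y) ^ 2 + m ^ 2 * sinh (k * y) ^ 2 =
      (a * cosh (2 * k * y) - b) / (a - b) := fun y => by
    rw [mul_assoc, cosh_two_mul, sinh_sq, hm2]
    field_simp
    ring
  have hderiv : ∀ y, HasDerivAt (fun y => arctan (m * tanh (k * y)))
      (k * √(a ^ 2 - b ^ 2) * (a * cosh (2 * k * y) - b)⁻¹) y := fun y =>
    (hasDerivAt_arctan_mul_tanh m k y).congr_deriv (by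
      rw [hquad, ← hm_mul]
      field_simp [(hden y).ne', (show a - b ≠ 0 by linarith)])
  have hbot : Tendsto (fun y => arctan (m * tanh (k * y))) atBot (𝓝 (arctan (m * -1))) :=
    (continuous_arctan.tendsto _).comp
      ((tendsto_tanh_atBot.comp (tendsto_id.const_mul_atBot hk)).const_mul m)
  have htop : Tendsto (fun y => arctan (m * tanh (k * y))) atTop (𝓝 (arctan (m * 1))) :=
    (continuous_arctan.tendsto _).comp
      ((tendsto_tanh_atTop.comp (tendsto_id.const_mul_atTop hk)).const_mul m)
  have hint := integral_of_hasDerivAt_of_tendsto_of_nonneg hderiv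
    (fun y => mul_nonneg hC.le (inv_nonneg.mpr (hden y).le)) hbot htop
  rw [integral_const_mul, mul_neg_one, mul_one, arctan_neg] at hint
  rw [eq_div_iff hC.ne']
  linarith

noncomputable def brightSolitonProfile (E c y : ℝ) : ℝ :=
  (2 * √(2 * E) / (c ^ 2 + 4 * E) ^ ((1 : ℝ) / 4)) *
    (1 / √(cosh (2 * √E * y) - c / √(c ^ 2 + 4 * E)))

section BrightSoliton

variable {E : ℝ} (c : ℝ)

theorem abs_lt_sqrt_sq_add (hE : 0 < E) : |c| < √(c ^ 2 + 4 * E) :=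
  lt_sqrt (abs_nonneg c) |>.mpr (by rw [sq_abs]; linarith)

theorem brightSolitonProfile_sq (hE : 0 < E) (y : ℝ) :
    brightSolitonProfile E c y ^ 2 = 8 * E * (√(c ^ 2 + 4 * E) * cosh (2 * √E * y) - c)⁻¹ := by
  have hc := abs_lt_sqrt_sq_add c hE
  set s := √(c ^ 2 + 4 * E)
  have hs : 0 < s := (abs_nonneg c).trans_lt hc
  have hquarter : ((c ^ 2 + 4 * E) ^ ((1 : ℝ) / 4)) ^ 2 = s := by
    rw [← rpow_natCast, ← rpow_mul (by positivity)]
    norm_num [s, sqrt_eq_rpow]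
  have hden : 0 < s * cosh (2 * √E * y) - c := by
    nlinarith [one_le_cosh (2 * √E * y), (abs_lt.mp hc).2]
  have hshift : cosh (2 * √E * y) - c / s = (s * cosh (2 * √E * y) - c) / s := by
    field_simp
  rw [brightSolitonProfile, mul_pow, div_pow, div_pow, hquarter, hshift, one_pow,
    sq_sqrt (div_pos hden hs).le, mul_pow, sq_sqrt (by linarith)]
  field_simp
  ring

theorem integral_brightSolitonProfile_sq (hE : 0 < E) :
    ∫ y, brightSolitonProfile E c y ^ 2 =
      8 * arctan (√((√(c ^ 2 + 4 * E) + c) / (√(c ^ 2 + 4 * E) - c))) := by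
  have hsq : √(c ^ 2 + 4 * E) ^ 2 - c ^ 2 = (2 * √E) ^ 2 := by
    rw [sq_sqrt (by positivity), mul_pow, sq_sqrt hE.le]
    ring
  simp_rw [brightSolitonProfile_sq c hE]
  rw [integral_const_mul, integral_inv_mul_cosh_sub (sqrt_pos.mpr hE) (abs_lt_sqrt_sq_add c hE),
    hsq, sqrt_sq (by positivity)]
  have hsqrtE : √E ^ 2 = E := sq_sqrt hE.le
  field_simp
  rw [hsqrtE]
  ring

end BrightSoliton

theorem bright_soliton_mass (E c : ℝ) (hE : 0 < E) :
    ∀ φ : ℝ → ℝ,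
      (φ = fun y =>
        (2 * Real.sqrt (2 * E) / (c ^ 2 + 4 * E) ^ ((1 : ℝ) / 4)) *
          (1 / Real.sqrt (Real.cosh (2 * Real.sqrt E * y) - c / Real.sqrt (c ^ 2 + 4 * E)))) →
      (∫ y : ℝ, φ y ^ 2) =
          8 * Real.arctan
            (Real.sqrt ((Real.sqrt (c ^ 2 + 4 * E) + c) / (Real.sqrt (c ^ 2 + 4 * E) - c))) ∧
        (∫ y : ℝ, φ y ^ 2) ≤ 4 * Real.pi := by
  rintro φ rfl
  have hmass := integral_brightSolitonProfile_sq c hE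
  refine ⟨hmass, hmass.trans_le ?_⟩
  linarith [arctan_lt_pi_div_two (√((√(c ^ 2 + 4 * E) + c) / (√(c ^ 2 + 4 * E) - c)))]
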